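/- Suppose ℓ is differentiable and strictly decreasing, the SVM constraints defining p^{mm⋆} are feasible, and for every sample i the scores of all non-optimal tokens are equal (γ_{it₁} = γ_{it₂} for all t₁, t₂ ≠ optᵢ) while γ_{i,optᵢ} > γ_{it} для all t ≠ optᵢ. Then the training objective ℒ has no stationary points: ∇ℒ(p) ≠ 0 for every p ∈ ℝ^d. -/

import Mathlib

open scoped RealInnerProductSpace

/-- Identify a plain function `Fin d → ℝ` with a point of Euclidean space. -/
noncomputable def toEuc {d : ℕ} (f : Fin d → ℝ) : EuclideanSpace ℝ (Fin d) := WithLp.toLp 2 f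

/-- The softmax map `𝕊(a)_t = e^{a_t} / Σ_τ e^{a_τ}`. -/
noncomputable def softmax {T : ℕ} (a : Fin T → ℝ) : Fin T → ℝ :=
  fun t => Real.exp (a t) / ∑ τ, Real.exp (a τ)

/-- Token scores `γᵢ = Yᵢ · Xᵢ v`, entrywise `γ_{it} = Yᵢ · x_{it}⊤v`. -/
noncomputable def score {n d T : ℕ} (X : Fin n → Matrix (Fin T) (Fin d) ℝ)
    (Y : Fin n → ℝ) (v : Fin d → ℝ) (i : Fin n) (t : Fin T) : ℝ :=
  Y i * ∑ j, X i t j * v j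

/-- Key rows `k_{it} = W⊤ x_{it}`, i.e. the rows of `Kᵢ = Xᵢ W`. -/
noncomputable def key {n d T : ℕ} (X : Fin n → Matrix (Fin T) (Fin d) ℝ)
    (W : Matrix (Fin d) (Fin d) ℝ) (i : Fin n) (t : Fin T) (j : Fin d) : ℝ :=
  (X i * W) t j

/-- Softmax attention probabilities `𝕊(Kᵢ p)`. -/
noncomputable def sprob {n d T : ℕ} (X : Fin n → Matrix (Fin T) (Fin d) ℝ)
    (W : Matrix (Fin d) (Fin d) ℝ) (i : Fin n) (p : EuclideanSpace ℝ (Fin d)) :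
    Fin T → ℝ :=
  softmax (fun t => ∑ j, key X W i t j * p j)

/-- The training objective `ℒ(p) = (1/n) Σᵢ ℓ(γᵢ⊤ 𝕊(Kᵢ p))`. -/
noncomputable def tLoss {n d T : ℕ} (ℓ : ℝ → ℝ)
    (X : Fin n → Matrix (Fin T) (Fin d) ℝ) (Y : Fin n → ℝ) (v : Fin d → ℝ)
    (W : Matrix (Fin d) (Fin d) ℝ) (p : EuclideanSpace ℝ (Fin d)) : ℝ :=
  (n : ℝ)⁻¹ * ∑ i, ℓ (∑ t, score X Y v i t * sprob X W i p t)

theorem univ_nonempty_of_pos {n : ℕ} (hn : 0 < n) :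
    (Finset.univ : Finset (Fin n)).Nonempty := ⟨⟨0, hn⟩, Finset.mem_univ _⟩

theorem erase_nonempty_of_two_le {T : ℕ} (hT : 2 ≤ T) (t0 : Fin T) :
    (Finset.univ.erase t0).Nonempty := by
  rw [← Finset.card_pos, Finset.card_erase_of_mem (Finset.mem_univ _), Finset.card_univ,
    Fintype.card_fin]
  omega

/-!
Move from `p` along `p^{mm⋆}`. On the line `p + s • p^{mm⋆}` the derivative of sample `i`'s
output `γᵢ⊤𝕊(Kᵢ(p + s • p^{mm⋆}))` at `s = 0` is the covariance of `γᵢ` and `b = Kᵢ p^{mm⋆}`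
under `σ = 𝕊(Kᵢ p)`. As `γᵢ` equals a constant `c` off `optᵢ`, this covariance is
`(γ_{i,optᵢ} - c) σ_{optᵢ} (b_{optᵢ} - Σ_t σ_t b_t)`, and it is positive because `p^{mm⋆}`
makes `b_{optᵢ}` the strictly largest logit. Since `ℓ' < 0`, the derivative of `ℒ` along
`p^{mm⋆}` is negative, so `∇ℒ(p) ≠ 0`.
-/

open Finset

section Softmax

variable {T : ℕ}

theorem softmax_apply (a : Fin T → ℝ) (t : Fin T) :
    softmax a t = Real.exp (a t) / ∑ τ, Real.exp (a τ) := rfl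

theorem sum_exp_pos [Nonempty (Fin T)] (a : Fin T → ℝ) : 0 < ∑ τ, Real.exp (a τ) :=
  sum_pos (fun _ _ => Real.exp_pos _) univ_nonempty

theorem softmax_pos (a : Fin T → ℝ) (t : Fin T) : 0 < softmax a t :=
  have : Nonempty (Fin T) := ⟨t⟩
  div_pos (Real.exp_pos _) (sum_exp_pos a)

theorem sum_softmax [Nonempty (Fin T)] (a : Fin T → ℝ) : ∑ t, softmax a t = 1 := by
  simp only [softmax_apply, ← sum_div, div_self (sum_exp_pos a).ne']

theorem differentiable_softmax_apply (t : Fin T) :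
    Differentiable ℝ fun a : Fin T → ℝ => softmax a t := by
  have : Nonempty (Fin T) := ⟨t⟩
  simp only [softmax_apply, div_eq_mul_inv]
  fun_prop (disch := exact fun a => (sum_exp_pos a).ne')

theorem hasDerivAt_softmax_add_smul (a b : Fin T → ℝ) (t : Fin T) :
    HasDerivAt (fun s : ℝ => softmax (a + s • b) t)
      (softmax a t * (b t - ∑ τ, softmax a τ * b τ)) 0 := by
  have : Nonempty (Fin T) := ⟨t⟩
  have hexp : ∀ τ, HasDerivAt (fun s : ℝ => Real.exp (a τ + s * b τ)) (Real.exp (a τ) * b τ) 0 :=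
    fun τ => by simpa using ((hasDerivAt_mul_const (x := 0) (b τ)).const_add (a τ)).exp
  have hZ := (sum_exp_pos a).ne'
  refine ((hexp t).fun_div (HasDerivAt.fun_sum fun τ _ => hexp τ) (by simpa using hZ)).congr_deriv
    ?_
  simp only [softmax_apply, zero_mul, add_zero, div_mul_eq_mul_div, ← sum_div]
  field_simp

noncomputable def softmaxCov (a γ b : Fin T → ℝ) : ℝ :=
  ∑ t, γ t * (softmax a t * (b t - ∑ τ, softmax a τ * b τ))

theorem hasDerivAt_sum_mul_softmax_add_smul (a γ b : Fin T → ℝ) :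
    HasDerivAt (fun s : ℝ => ∑ t, γ t * softmax (a + s • b) t) (softmaxCov a γ b) 0 :=
  HasDerivAt.fun_sum fun t _ => (hasDerivAt_softmax_add_smul a b t).const_mul (γ t)

theorem sum_softmax_mul_lt [Nontrivial (Fin T)] (a : Fin T → ℝ) {b : Fin T → ℝ} {t₀ : Fin T}
    (hb : ∀ t ≠ t₀, b t < b t₀) : ∑ t, softmax a t * b t < b t₀ := by
  obtain ⟨t₁, ht₁⟩ := exists_ne t₀
  have hgap : b t₀ - ∑ t, softmax a t * b t = ∑ t, softmax a t * (b t₀ - b t) := by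
    simp only [mul_sub, sum_sub_distrib, ← sum_mul, sum_softmax, one_mul]
  have : 0 < ∑ t, softmax a t * (b t₀ - b t) := by
    refine sum_pos' (fun t _ => ?_) ⟨t₁, mem_univ _, ?_⟩
    · rcases eq_or_ne t t₀ with rfl | ht
      · simp
      · exact mul_nonneg (softmax_pos a t).le (sub_pos.2 (hb t ht)).le
    · exact mul_pos (softmax_pos a t₁) (sub_pos.2 (hb t₁ ht₁))
  linarith

theorem softmaxCov_pos [Nontrivial (Fin T)] (a : Fin T → ℝ) {γ b : Fin T → ℝ}
    {t₀ : Fin T} {c : ℝ} (hγ : ∀ t ≠ t₀, γ t = c) (hc : c < γ t₀) (hb : ∀ t ≠ t₀, b t < b t₀) :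
    0 < softmaxCov a γ b := by
  set m := ∑ τ, softmax a τ * b τ
  have hcentered : ∑ t, softmax a t * (b t - m) = 0 := by
    simp only [mul_sub, sum_sub_distrib, ← sum_mul, sum_softmax, one_mul, m, sub_self]
  have hsingle : softmaxCov a γ b = (γ t₀ - c) * (softmax a t₀ * (b t₀ - m)) := by
    calc softmaxCov a γ b
        = ∑ t, γ t * (softmax a t * (b t - m)) := rfl
      _ = ∑ t, (γ t - c) * (softmax a t * (b t - m)) := by
          simp only [sub_mul, sum_sub_distrib, ← mul_sum, hcentered, mul_zero, sub_zero]
      _ = (γ t₀ - c) * (softmax a t₀ * (b t₀ - m)) :=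
          sum_eq_single_of_mem t₀ (mem_univ _) fun t _ ht => by rw [hγ t ht, sub_self, zero_mul]
  rw [hsingle]
  exact mul_pos (sub_pos.2 hc) (mul_pos (softmax_pos a t₀) (sub_pos.2 (sum_softmax_mul_lt a hb)))

end Softmax

section Objective

variable {n d T : ℕ} (X : Fin n → Matrix (Fin T) (Fin d) ℝ) (Y : Fin n → ℝ) (v : Fin d → ℝ)
  (W : Matrix (Fin d) (Fin d) ℝ)

/-- The logits `Kᵢ p` of the paper. -/
noncomputable def logits (i : Fin n) (p : EuclideanSpace ℝ (Fin d)) : Fin T → ℝ :=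
  fun t => ∑ j, key X W i t j * p j

theorem sprob_eq_softmax_logits (i : Fin n) (p : EuclideanSpace ℝ (Fin d)) :
    sprob X W i p = softmax (logits X W i p) := rfl

theorem logits_add_smul (i : Fin n) (p q : EuclideanSpace ℝ (Fin d)) (s : ℝ) :
    logits X W i (p + s • q) = logits X W i p + s • logits X W i q := by
  ext t
  simp only [logits, PiLp.add_apply, PiLp.smul_apply, smul_eq_mul, Pi.add_apply, Pi.smul_apply,
    mul_add, sum_add_distrib, mul_sum]
  congr 1
  exact sum_congr rfl fun j _ => by ring

theorem logits_sub_logits (i : Fin n) (q : EuclideanSpace ℝ (Fin d)) (t₀ t : Fin T) :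
    logits X W i q t₀ - logits X W i q t = ∑ j, (key X W i t₀ j - key X W i t j) * q j := by
  simp only [logits, sub_mul, sum_sub_distrib]

theorem differentiable_logits (i : Fin n) : Differentiable ℝ (logits X W i) :=
  differentiable_pi.2 fun t => by unfold logits; fun_prop

variable {ℓ : ℝ → ℝ}

theorem differentiable_tLoss (hℓ : Differentiable ℝ ℓ) : Differentiable ℝ (tLoss ℓ X Y v W) := by
  have hσ : ∀ i t, Differentiable ℝ fun p => sprob X W i p t :=
    fun i t => (differentiable_softmax_apply t).comp (differentiable_logits X W i)
  unfold tLoss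
  fun_prop

theorem hasLineDerivAt_tLoss (hℓ : Differentiable ℝ ℓ) (p q : EuclideanSpace ℝ (Fin d)) :
    HasLineDerivAt ℝ (tLoss ℓ X Y v W)
      ((n : ℝ)⁻¹ * ∑ i, deriv ℓ (∑ t, score X Y v i t * sprob X W i p t) *
        softmaxCov (logits X W i p) (score X Y v i) (logits X W i q)) p q := by
  have hmargin : ∀ i, HasDerivAt (fun s : ℝ => ∑ t, score X Y v i t * sprob X W i (p + s • q) t)
      (softmaxCov (logits X W i p) (score X Y v i) (logits X W i q)) 0 := fun i => by
    simpa only [sprob_eq_softmax_logits, ← logits_add_smul] using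
      hasDerivAt_sum_mul_softmax_add_smul (logits X W i p) (score X Y v i) (logits X W i q)
  have hsample : ∀ i,
      HasDerivAt (fun s : ℝ => ℓ (∑ t, score X Y v i t * sprob X W i (p + s • q) t))
      (deriv ℓ (∑ t, score X Y v i t * sprob X W i p t) *
        softmaxCov (logits X W i p) (score X Y v i) (logits X W i q)) 0 := fun i => by
    have h := (hℓ _).hasDerivAt.comp (0 : ℝ) (hmargin i)
    rwa [zero_smul, add_zero] at h
  exact (HasDerivAt.fun_sum fun i _ => hsample i).const_mul _

end Objective

theorem no_stationary_points_general (n d T : ℕ) (hn : 0 < n) (hT : 2 ≤ T)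
    (X : Fin n → Matrix (Fin T) (Fin d) ℝ) (Y : Fin n → ℝ)
    (v : Fin d → ℝ) (W : Matrix (Fin d) (Fin d) ℝ)
    (ℓ : ℝ → ℝ) (hdiff : Differentiable ℝ ℓ)
    (hderiv : ∀ x, deriv ℓ x < 0)
    (opt : Fin n → Fin T) (pmm : EuclideanSpace ℝ (Fin d))
    (hfeas : ∀ i, ∀ t, t ≠ opt i →
      1 ≤ ∑ j, (key X W i (opt i) j - key X W i t j) * pmm j)
    (hsame : ∀ i, ∀ t₁ t₂, t₁ ≠ opt i → t₂ ≠ opt i →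
      score X Y v i t₁ = score X Y v i t₂)
    (hopt : ∀ i, ∀ t, t ≠ opt i → score X Y v i t < score X Y v i (opt i)) :
    ∀ p : EuclideanSpace ℝ (Fin d), gradient (tLoss ℓ X Y v W) p ≠ 0 := by
  have : Nontrivial (Fin T) := Fin.nontrivial_iff_two_le.2 hT
  intro p hgrad
  have hstationary : HasLineDerivAt ℝ (tLoss ℓ X Y v W) 0 p pmm := by
    simpa [hgrad] using
      (differentiable_tLoss X Y v W hdiff p).hasGradientAt.hasFDerivAt.hasLineDerivAt pmm
  have hmargin : ∀ i, ∀ t ≠ opt i, logits X W i pmm t < logits X W i pmm (opt i) :=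
    fun i t ht => sub_pos.1 (by linarith [logits_sub_logits X W i pmm (opt i) t, hfeas i t ht])
  have hcov : ∀ i, 0 < softmaxCov (logits X W i p) (score X Y v i) (logits X W i pmm) := by
    intro i
    obtain ⟨t₁, ht₁⟩ := exists_ne (opt i)
    exact softmaxCov_pos _ (fun t ht => hsame i t t₁ ht ht₁) (hopt i t₁ ht₁) (hmargin i)
  refine absurd ((hasLineDerivAt_tLoss X Y v W hdiff p pmm).unique hstationary) (ne_of_lt ?_)
  exact mul_neg_of_pos_of_neg (by positivity) <| sum_neg
    (fun i _ => mul_neg_of_neg_of_pos (hderiv _) (hcov i)) (univ_nonempty_of_pos hn)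

/-- **No stationary points.** If `ℓ` is differentiable and strictly decreasing, the SVM
constraints are feasible (witnessed by the minimal-norm solution `p^{mm⋆}`), and for each
sample all non-optimal token scores coincide while the optimal score is strictly largest,
then the training objective `ℒ` has no stationary points: `∇ℒ(p) ≠ 0` for every `p`. -/
theorem no_stationary_points (n d T : ℕ) (hn : 0 < n) (hT : 2 ≤ T)
    (X : Fin n → Matrix (Fin T) (Fin d) ℝ) (Y : Fin n → ℝ)
    (hY : ∀ i, Y i = 1 ∨ Y i = -1)
    (v : Fin d → ℝ) (W : Matrix (Fin d) (Fin d) ℝ)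
    (ℓ : ℝ → ℝ) (hdiff : Differentiable ℝ ℓ) (hanti : StrictAnti ℓ)
    (hderiv : ∀ x, deriv ℓ x < 0)
    (opt : Fin n → Fin T) (pmm : EuclideanSpace ℝ (Fin d))
    (hfeas : ∀ i, ∀ t, t ≠ opt i →
      1 ≤ ∑ j, (key X W i (opt i) j - key X W i t j) * pmm j)
    (hmin : ∀ q : EuclideanSpace ℝ (Fin d),
      (∀ i, ∀ t, t ≠ opt i → 1 ≤ ∑ j, (key X W i (opt i) j - key X W i t j) * q j) →
      ‖pmm‖ ≤ ‖q‖)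
    (hsame : ∀ i, ∀ t₁ t₂, t₁ ≠ opt i → t₂ ≠ opt i →
      score X Y v i t₁ = score X Y v i t₂)
    (hopt : ∀ i, ∀ t, t ≠ opt i → score X Y v i t < score X Y v i (opt i)) :
    ∀ p : EuclideanSpace ℝ (Fin d), gradient (tLoss ℓ X Y v W) p ≠ 0 :=
  no_stationary_points_general n d T hn hT X Y v W ℓ hdiff hderiv opt pmm hfeas hsame hopt
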